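/- arXiv:2604.20466 — 2 statements merged into one kernel-verified Lean document; each statement's English description precedes it below -/
import Mathlib

section
/- Let L ≥ 1, let σ > 0, G ≠ 0, and P > 0 be real numbers, let h₁, h₂ ∈ ℂ^L, and let ħ ∈ ℂ. Define the stacked channel vector h = (h₁ ; G ħ h₂) ∈ ℂ^{2L} and R_n = σ² · blockdiag(I_L, I_L + G² h₂ h₂†). Then P · h† R_n⁻¹ h = γ₁ + γ₂ γ₃ / (γ₂ + ς), where γ₁ = P‖h₁‖²/σ², γ₂ = ‖h₂‖²/σ², γ₃ = P|ħ|²/σ², and ς = 1/(σ² G²). -/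
/-!
Since `(I + G² h₂ h₂†) h₂ = (1 + G² ‖h₂‖²) h₂`, the covariance `R_n` maps `(a h₁ ; b h₂)` to
`(σ² a h₁ ; σ² (1 + G² ‖h₂‖²) b h₂)`, so `R_n⁻¹ h` is read off without inverting anything
(`R_n` is invertible by the matrix determinant lemma). The quadratic form is then
`‖h₁‖²/σ² + G² |ħ|² ‖h₂‖² / (σ² (1 + G² ‖h₂‖²))`, which is the stated expression after dividing
the last fraction through by `σ⁴ G²`.
-/

open Matrix

/-- The total noise covariance matrix `R_n = σ² · blockdiag(I_L, I_L + G² h₂ h₂†)`. -/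
noncomputable def noiseCov (L : ℕ) (σ G : ℝ) (h₂ : Fin L → ℂ) :
    Matrix (Fin L ⊕ Fin L) (Fin L ⊕ Fin L) ℂ :=
  ((σ : ℂ) ^ 2) • Matrix.fromBlocks (1 : Matrix (Fin L) (Fin L) ℂ) 0 0
    ((1 : Matrix (Fin L) (Fin L) ℂ) + ((G : ℂ) ^ 2) • Matrix.vecMulVec h₂ (star h₂))

/-- The stacked effective channel vector `h = (h₁ ; G hbar h₂) ∈ ℂ^{2L}`. -/
def stackedChannel {L : ℕ} (G : ℝ) (hbar : ℂ) (h₁ h₂ : Fin L → ℂ) : Fin L ⊕ Fin L → ℂ :=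
  Sum.elim h₁ (fun i => (G : ℂ) * hbar * h₂ i)

namespace Matrix

variable {m α : Type*} [Fintype m] [DecidableEq m] [CommRing α]

theorem det_one_add_smul_vecMulVec (c : α) (u v : m → α) :
    det (1 + c • vecMulVec u v) = 1 + c * (v ⬝ᵥ u) := by
  rw [← smul_vecMulVec, vecMulVec_eq Unit, det_one_add_replicateCol_mul_replicateRow,
    dotProduct_smul, smul_eq_mul]

theorem one_add_smul_vecMulVec_mulVec (c : α) (u v : m → α) :
    (1 + c • vecMulVec u v) *ᵥ u = (1 + c * (v ⬝ᵥ u)) • u := by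
  rw [add_mulVec, one_mulVec, smul_mulVec, vecMulVec_mulVec, op_smul_eq_smul, smul_smul,
    add_smul, one_smul]

theorem inv_mulVec_eq_of_mulVec_eq {A : Matrix m m α} (hA : IsUnit A.det) {u v : m → α}
    (h : A *ᵥ v = u) : A⁻¹ *ᵥ u = v := by
  rw [← h, mulVec_mulVec, nonsing_inv_mul A hA, one_mulVec]

end Matrix

theorem Complex.star_dotProduct_self {ι : Type*} [Fintype ι] (f : ι → ℂ) :
    star f ⬝ᵥ f = ((∑ i, normSq (f i) : ℝ) : ℂ) := by
  simp only [dotProduct, Pi.star_apply, ofReal_sum, normSq_eq_conj_mul_self, star_def]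

section Relay

variable {L : ℕ} {σ : ℝ} (G : ℝ) (hbar : ℂ) (h₁ h₂ : Fin L → ℂ)

theorem one_add_sq_mul_sum_normSq_pos : 0 < 1 + G ^ 2 * ∑ i, Complex.normSq (h₂ i) := by
  have := Finset.sum_nonneg fun i (_ : i ∈ Finset.univ) => Complex.normSq_nonneg (h₂ i)
  positivity

theorem one_add_sq_mul_star_dotProduct_self_ne_zero :
    1 + (G : ℂ) ^ 2 * (star h₂ ⬝ᵥ h₂) ≠ 0 := by
  rw [Complex.star_dotProduct_self]
  exact_mod_cast (one_add_sq_mul_sum_normSq_pos G h₂).ne'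

theorem stackedChannel_eq_sumElim :
    stackedChannel G hbar h₁ h₂ = Sum.elim h₁ (((G : ℂ) * hbar) • h₂) := by
  ext (i | i) <;> simp [stackedChannel, mul_assoc]

theorem isUnit_det_noiseCov (hσ : σ ≠ 0) : IsUnit (noiseCov L σ G h₂).det := by
  rw [isUnit_iff_ne_zero, noiseCov, det_smul, det_fromBlocks_zero₁₂, det_one, one_mul,
    det_one_add_smul_vecMulVec]
  exact mul_ne_zero (pow_ne_zero _ (pow_ne_zero 2 (Complex.ofReal_ne_zero.mpr hσ)))
    (one_add_sq_mul_star_dotProduct_self_ne_zero G h₂)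

theorem noiseCov_mulVec_sumElim (a b : ℂ) :
    noiseCov L σ G h₂ *ᵥ Sum.elim (a • h₁) (b • h₂)
      = Sum.elim (((σ : ℂ) ^ 2 * a) • h₁)
          (((σ : ℂ) ^ 2 * (1 + (G : ℂ) ^ 2 * (star h₂ ⬝ᵥ h₂)) * b) • h₂) := by
  rw [noiseCov, smul_mulVec, fromBlocks_mulVec]
  ext (i | i) <;> simp [mulVec_smul, one_add_smul_vecMulVec_mulVec] <;> ring

theorem inv_noiseCov_mulVec_stackedChannel (hσ : σ ≠ 0) :
    (noiseCov L σ G h₂)⁻¹ *ᵥ stackedChannel G hbar h₁ h₂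
      = Sum.elim (((σ : ℂ) ^ 2)⁻¹ • h₁)
          (((G : ℂ) * hbar / ((σ : ℂ) ^ 2 * (1 + (G : ℂ) ^ 2 * (star h₂ ⬝ᵥ h₂)))) • h₂) := by
  refine inv_mulVec_eq_of_mulVec_eq (isUnit_det_noiseCov G h₂ hσ) ?_
  have hσ' : (σ : ℂ) ≠ 0 := Complex.ofReal_ne_zero.mpr hσ
  rw [noiseCov_mulVec_sumElim, stackedChannel_eq_sumElim]
  congr 2
  · rw [mul_inv_cancel₀ (pow_ne_zero 2 hσ'), one_smul]
  · field_simp [one_add_sq_mul_star_dotProduct_self_ne_zero G h₂]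

theorem star_stackedChannel_dotProduct_inv_noiseCov_mulVec (hσ : σ ≠ 0) :
    star (stackedChannel G hbar h₁ h₂) ⬝ᵥ
        (noiseCov L σ G h₂)⁻¹ *ᵥ stackedChannel G hbar h₁ h₂
      = (((∑ i, Complex.normSq (h₁ i)) / σ ^ 2
          + G ^ 2 * Complex.normSq hbar * (∑ i, Complex.normSq (h₂ i))
            / (σ ^ 2 * (1 + G ^ 2 * ∑ i, Complex.normSq (h₂ i))) : ℝ) : ℂ) := by
  have hgain :
      star ((G : ℂ) * hbar) * G * hbar = ((G ^ 2 * Complex.normSq hbar : ℝ) : ℂ) := by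
    rw [Complex.ofReal_mul, Complex.normSq_eq_conj_mul_self]
    simp only [star_mul', Complex.star_def, Complex.conj_ofReal, Complex.ofReal_pow]
    ring
  rw [inv_noiseCov_mulVec_stackedChannel G hbar h₁ h₂ hσ, stackedChannel_eq_sumElim,
    Function.star_sumElim, sumElim_dotProduct_sumElim, star_smul, smul_dotProduct,
    dotProduct_smul, dotProduct_smul, Complex.star_dotProduct_self,
    Complex.star_dotProduct_self]
  simp only [smul_eq_mul]
  rw [← mul_assoc, mul_div_assoc', ← mul_assoc, hgain]
  push_cast
  ring

end Relay

theorem stmt_5_general (L : ℕ) (σ G P : ℝ) (hσ : 0 < σ) (hG : G ≠ 0)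
    (h₁ h₂ : Fin L → ℂ) (hbar : ℂ) :
    (P : ℂ) * (star (stackedChannel G hbar h₁ h₂) ⬝ᵥ
        (noiseCov L σ G h₂)⁻¹.mulVec (stackedChannel G hbar h₁ h₂))
      = (((P * (∑ i, Complex.normSq (h₁ i)) / σ ^ 2
          + ((∑ i, Complex.normSq (h₂ i)) / σ ^ 2) * (P * Complex.normSq hbar / σ ^ 2)
            / ((∑ i, Complex.normSq (h₂ i)) / σ ^ 2 + 1 / (σ ^ 2 * G ^ 2)) : ℝ)) : ℂ) := by
  rw [star_stackedChannel_dotProduct_inv_noiseCov_mulVec G hbar h₁ h₂ hσ.ne',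
    ← Complex.ofReal_mul]
  have hpos := one_add_sq_mul_sum_normSq_pos G h₂
  set S₂ := ∑ i, Complex.normSq (h₂ i)
  have hden : S₂ / σ ^ 2 + 1 / (σ ^ 2 * G ^ 2) = (1 + G ^ 2 * S₂) / (σ ^ 2 * G ^ 2) := by
    field_simp
    ring
  rw [hden]
  congr 1
  field_simp [hpos.ne']

theorem stmt_5 (L : ℕ) (hL : 1 ≤ L) (σ G P : ℝ) (hσ : 0 < σ) (hG : G ≠ 0) (hP : 0 < P)
    (h₁ h₂ : Fin L → ℂ) (hbar : ℂ) :
    (P : ℂ) * (star (stackedChannel G hbar h₁ h₂) ⬝ᵥ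
        (noiseCov L σ G h₂)⁻¹.mulVec (stackedChannel G hbar h₁ h₂))
      = (((P * (∑ i, Complex.normSq (h₁ i)) / σ ^ 2
          + ((∑ i, Complex.normSq (h₂ i)) / σ ^ 2) * (P * Complex.normSq hbar / σ ^ 2)
            / ((∑ i, Complex.normSq (h₂ i)) / σ ^ 2 + 1 / (σ ^ 2 * G ^ 2)) : ℝ)) : ℂ) :=
  stmt_5_general L σ G P hσ hG h₁ h₂ hbar
end

section
/- Let L ≥ 1, let σ > 0, G ≠ 0, and P > 0 be real numbers, let h₁, h₂ ∈ ℂ^L, and let ħ ∈ ℂ. Define h = (h₁ ; G ħ h₂) ∈ ℂ^{2L} and R_n = σ² · blockdiag(I_L, I_L + G² h₂ h₂†). Then for every nonzero w ∈ ℂ^{2L}, the combiner SINR satisfies P · (w† h h† w)/(w† R_n w) ≤ γ₁ + γ₂ γ₃ / (γ₂ + ς), where γ₁ = P‖h₁‖²/σ², γ₂ = ‖h₂‖²/σ², γ₃ = P|ħ|²/σ², ς = 1/(σ² G²); and if h ≠ 0, equality is attained at w = R_n⁻¹ h. -/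
open Matrix

/-- The cooperative-diversity combiner output SINR
`γ_AF(w) = P · (w† h h† w)/(w† R_n w)`. -/
noncomputable def combinerSINR {L : ℕ} (P : ℝ) (h : Fin L ⊕ Fin L → ℂ)
    (Rn : Matrix (Fin L ⊕ Fin L) (Fin L ⊕ Fin L) ℂ) (w : Fin L ⊕ Fin L → ℂ) : ℂ :=
  (P : ℂ) * (star w ⬝ᵥ (Matrix.vecMulVec h (star h)).mulVec w) / (star w ⬝ᵥ Rn.mulVec w)

/-! ### Auxiliary lemmas -/

lemma key_ineq (A B n1 n2 g m α τ β : ℝ) (hA:0≤A)(hB:0≤B)(hn1:0≤n1)(hn2:0≤n2)(hg:0≤g)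
    (hα:0≤α)(hτ:0≤τ)(hβ:0≤β) (hβ2 : β^2 = g*m)
    (h1: α^2 ≤ A*n1) (h2: τ^2 ≤ B*n2) :
    (1+g*n2)*(α+β*τ)^2 ≤ (n1*(1+g*n2)+g*m*n2)*(A+B+g*τ^2) := by
  rw [← hβ2]
  set k := 1 + g*n2 with hk
  have hkpos : 0 < k := by positivity
  rcases eq_or_lt_of_le hn2 with hz | hn2pos
  · have hτ0 : τ = 0 := by nlinarith
    subst hτ0; simp only [hk, ← hz]
    nlinarith
  · have hXYnn : 0 ≤ A*n2^2*β^2 + k^2*τ^2*n1 := by positivity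
    have hZnn : 0 ≤ 2*(k*n2*α*β*τ) := by positivity
    have h4xy : (2*(k*n2*α*β*τ))^2 ≤ 4*(A*n2^2*β^2)*(k^2*τ^2*n1) := by
      nlinarith [mul_nonneg (sub_nonneg.2 h1) (mul_nonneg (mul_nonneg (sq_nonneg k) (sq_nonneg n2)) (mul_nonneg (sq_nonneg β) (sq_nonneg τ)))]
    have hZ : 2*(k*n2*α*β*τ) ≤ A*n2^2*β^2 + k^2*τ^2*n1 := by
      nlinarith [sq_nonneg (A*n2^2*β^2 - k^2*τ^2*n1), hXYnn, hZnn, h4xy]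
    have h3 : k*n2*(α+β*τ)^2 ≤ (A*n2 + k*τ^2) * (n1*k + β^2*n2) := by
      nlinarith [hZ, mul_nonneg (mul_nonneg hkpos.le hn2) (sub_nonneg.2 h1)]
    have hb : A*n2 + k*τ^2 ≤ n2*(A+B+g*τ^2) := by nlinarith
    have hc : 0 ≤ n1*k + β^2*n2 := by positivity
    have h5 : n2*(k*(α+β*τ)^2) ≤ n2*((n1*k+β^2*n2)*(A+B+g*τ^2)) := by
      calc n2*(k*(α+β*τ)^2) = k*n2*(α+β*τ)^2 := by ring
      _ ≤ (A*n2 + k*τ^2) * (n1*k + β^2*n2) := h3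
      _ ≤ (n2*(A+B+g*τ^2))*(n1*k+β^2*n2) := mul_le_mul_of_nonneg_right hb hc
      _ = n2*((n1*k+β^2*n2)*(A+B+g*τ^2)) := by ring
    have h6 := (mul_le_mul_iff_right₀ hn2pos).mp h5
    linarith [h6]

lemma csw {L : ℕ} (x y : Fin L → ℂ) :
    ‖∑ i, (starRingEnd ℂ) (x i) * y i‖ ^ 2 ≤
      (∑ i, Complex.normSq (x i)) * (∑ i, Complex.normSq (y i)) := by
  have h1 : ‖∑ i, (starRingEnd ℂ) (x i) * y i‖ ≤
      ∑ i, ‖x i‖ * ‖y i‖ := by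
    refine (norm_sum_le _ _).trans_eq ?_
    simp [norm_mul]
  have h2 := pow_le_pow_left₀ (norm_nonneg _) h1 2
  refine h2.trans ?_
  have := Finset.sum_mul_sq_le_sq_mul_sq Finset.univ (fun i => ‖x i‖) (fun i => ‖y i‖)
  simpa [Complex.sq_norm] using this

lemma vmv_mulVec {n : Type*} [Fintype n] (a b w : n → ℂ) :
    (vecMulVec a b).mulVec w = (b ⬝ᵥ w) • a := by
  funext i
  simp only [mulVec, dotProduct, vecMulVec_apply, Pi.smul_apply, smul_eq_mul, Finset.sum_mul]
  exact Finset.sum_congr rfl (by intros; ring)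

lemma vmv_mul_vmv {n : Type*} [Fintype n] (a b c d : n → ℂ) :
    vecMulVec a b * vecMulVec c d = (b ⬝ᵥ c) • vecMulVec a d := by
  ext i j
  simp [Matrix.mul_apply, vecMulVec_apply, dotProduct, Finset.sum_mul, Finset.mul_sum]
  apply Finset.sum_congr rfl
  intros; ring

lemma sum_conj_mul_self {L : ℕ} (x : Fin L → ℂ) :
    ∑ i, (starRingEnd ℂ) (x i) * x i = ((∑ i, Complex.normSq (x i) : ℝ) : ℂ) := by
  rw [Complex.ofReal_sum]
  exact Finset.sum_congr rfl fun i _ => by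
    rw [Complex.normSq_eq_conj_mul_self]

lemma Rn_mulVec (L : ℕ) (σ G : ℝ) (h₂ : Fin L → ℂ) (u : Fin L ⊕ Fin L → ℂ) :
    (noiseCov L σ G h₂).mulVec u = Sum.elim (fun i => (σ:ℂ)^2 * u (Sum.inl i))
      (fun j => (σ:ℂ)^2 * (u (Sum.inr j)
        + (G:ℂ)^2 * (∑ i, (starRingEnd ℂ) (h₂ i) * u (Sum.inr i)) * h₂ j)) := by
  have hu : u = Sum.elim (u ∘ Sum.inl) (u ∘ Sum.inr) := (Sum.elim_comp_inl_inr u).symm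
  rw [noiseCov, smul_mulVec]
  nth_rewrite 1 [hu]
  rw [fromBlocks_mulVec]
  funext x
  cases x with
  | inl i => simp
  | inr j =>
    simp only [Sum.elim_inr, add_mulVec, smul_mulVec, vmv_mulVec, dotProduct,
      zero_mulVec, one_mulVec,
      Pi.add_apply, Pi.zero_apply, Pi.smul_apply, smul_eq_mul, Complex.star_def,
      Function.comp_apply, Pi.star_apply]
    ring

lemma Rn_mul_inv (L : ℕ) (σ G : ℝ) (hσ : σ ≠ 0) (h₂ : Fin L → ℂ) :
    noiseCov L σ G h₂ *
      ((((σ:ℂ)^2)⁻¹) • Matrix.fromBlocks 1 0 0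
        ((1 : Matrix (Fin L) (Fin L) ℂ) -
          ((G:ℂ)^2 / (1 + (G:ℂ)^2 * ((∑ i, Complex.normSq (h₂ i) : ℝ) : ℂ))) •
            Matrix.vecMulVec h₂ (star h₂))) = 1 := by
  have hσc : ((σ:ℂ)^2) ≠ 0 := by
    simp [pow_eq_zero_iff, Complex.ofReal_eq_zero, hσ]
  set n2c : ℂ := ((∑ i, Complex.normSq (h₂ i) : ℝ) : ℂ) with hn2c
  have hkne : (1 + (G:ℂ)^2 * n2c) ≠ 0 := by
    have he : (1 + (G:ℂ)^2 * n2c) = (((1 + G^2 * ∑ i, Complex.normSq (h₂ i)) : ℝ) : ℂ) := by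
      push_cast [hn2c]; ring
    have hnn : (0:ℝ) ≤ ∑ i, Complex.normSq (h₂ i) :=
      Finset.sum_nonneg fun i _ => Complex.normSq_nonneg _
    have hpos : (0:ℝ) < 1 + G^2 * ∑ i, Complex.normSq (h₂ i) := by nlinarith [sq_nonneg G]
    rw [he, Ne, Complex.ofReal_eq_zero]
    linarith
  have hdot : (star h₂) ⬝ᵥ h₂ = n2c := by
    simp only [dotProduct, Pi.star_apply, hn2c, Complex.star_def]
    rw [Complex.ofReal_sum]
    exact Finset.sum_congr rfl (fun i _ => by rw [Complex.normSq_eq_conj_mul_self])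
  set V := Matrix.vecMulVec h₂ (star h₂) with hV
  set g : ℂ := (G:ℂ)^2 with hg
  set c : ℂ := g / (1 + g * n2c) with hc
  have hVV : V * V = n2c • V := by rw [hV, vmv_mul_vmv, hdot]
  have hbot : ((1 : Matrix (Fin L) (Fin L) ℂ) + g • V) * (1 - c • V) = 1 := by
    have expand : ((1 : Matrix (Fin L) (Fin L) ℂ) + g • V) * (1 - c • V)
        = 1 - c • V + (g • V - (c*g*n2c) • V) := by
      rw [add_mul, one_mul, mul_sub, Matrix.mul_one, Matrix.mul_smul, Matrix.smul_mul,
        hVV, smul_smul, smul_smul]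
    rw [expand]
    have hcoef : g - c - c*g*n2c = 0 := by rw [hc]; field_simp; ring
    have hre : (1 : Matrix (Fin L) (Fin L) ℂ) - c • V + (g • V - (c*g*n2c) • V)
        = 1 + (g - c - c*g*n2c) • V := by
      rw [sub_smul, sub_smul]; abel
    rw [hre, hcoef, zero_smul, add_zero]
  rw [noiseCov, Matrix.smul_mul, Matrix.mul_smul, smul_smul, mul_inv_cancel₀ hσc,
    one_smul, fromBlocks_multiply]
  simp only [Matrix.mul_one, Matrix.one_mul, Matrix.mul_zero, Matrix.zero_mul,
    add_zero, zero_add]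
  rw [hbot, fromBlocks_one]

lemma dot_w_h {L : ℕ} (G : ℝ) (hbar : ℂ) (h₁ h₂ : Fin L → ℂ) (w : Fin L ⊕ Fin L → ℂ) :
    star w ⬝ᵥ stackedChannel G hbar h₁ h₂
      = (∑ i, (starRingEnd ℂ) (w (Sum.inl i)) * h₁ i)
        + (G:ℂ) * hbar * (starRingEnd ℂ) (∑ i, (starRingEnd ℂ) (h₂ i) * w (Sum.inr i)) := by
  simp only [dotProduct, Fintype.sum_sum_type, stackedChannel, Sum.elim_inl, Sum.elim_inr,
    Pi.star_apply, Complex.star_def, map_sum, _root_.map_mul, Complex.conj_conj]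
  rw [Finset.mul_sum]
  congr 1
  exact Finset.sum_congr rfl fun i _ => by ring

lemma dot_w_Rn (L : ℕ) (σ G : ℝ) (h₂ : Fin L → ℂ) (w : Fin L ⊕ Fin L → ℂ) :
    star w ⬝ᵥ (noiseCov L σ G h₂).mulVec w
      = ((σ^2 * ((∑ i, Complex.normSq (w (Sum.inl i))) + (∑ i, Complex.normSq (w (Sum.inr i)))
          + G^2 * Complex.normSq (∑ i, (starRingEnd ℂ) (h₂ i) * w (Sum.inr i))) : ℝ) : ℂ) := by
  rw [Rn_mulVec]
  simp only [dotProduct, Fintype.sum_sum_type, Sum.elim_inl, Sum.elim_inr,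
    Pi.star_apply, Complex.star_def]
  set s : ℂ := ∑ i, (starRingEnd ℂ) (h₂ i) * w (Sum.inr i) with hs
  have hconjs : ∑ j, (starRingEnd ℂ) (w (Sum.inr j)) * h₂ j = (starRingEnd ℂ) s := by
    rw [hs, map_sum]
    exact Finset.sum_congr rfl fun i _ => by rw [_root_.map_mul, Complex.conj_conj]; ring
  have e1 : ∑ i, (starRingEnd ℂ) (w (Sum.inl i)) * ((σ:ℂ)^2 * w (Sum.inl i))
      = (σ:ℂ)^2 * ((∑ i, Complex.normSq (w (Sum.inl i)) : ℝ) : ℂ) := by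
    rw [← sum_conj_mul_self (fun i => w (Sum.inl i)), Finset.mul_sum]
    exact Finset.sum_congr rfl fun i _ => by ring
  have e2 : ∑ j, (starRingEnd ℂ) (w (Sum.inr j))
        * ((σ:ℂ)^2 * (w (Sum.inr j) + (G:ℂ)^2 * s * h₂ j))
      = (σ:ℂ)^2 * (((∑ i, Complex.normSq (w (Sum.inr i)) : ℝ) : ℂ)
          + (G:ℂ)^2 * (s * (starRingEnd ℂ) s)) := by
    have : ∀ j, (starRingEnd ℂ) (w (Sum.inr j)) * ((σ:ℂ)^2 * (w (Sum.inr j) + (G:ℂ)^2 * s * h₂ j))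
        = (σ:ℂ)^2 * ((starRingEnd ℂ) (w (Sum.inr j)) * w (Sum.inr j))
          + (σ:ℂ)^2 * (G:ℂ)^2 * s * ((starRingEnd ℂ) (w (Sum.inr j)) * h₂ j) := fun j => by ring
    rw [Finset.sum_congr rfl fun j _ => this j, Finset.sum_add_distrib, ← Finset.mul_sum,
      ← Finset.mul_sum, sum_conj_mul_self (fun i => w (Sum.inr i)), hconjs]
    ring
  rw [e1, e2, Complex.mul_conj]
  push_cast
  ring

lemma scalar_cv (σ G k n1 n2 : ℝ) (hbar : ℂ) (hk : k ≠ 0) (hσ : σ ≠ 0) :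
    ((((σ^2)⁻¹*n1 : ℝ)):ℂ) + (G:ℂ)*hbar*(starRingEnd ℂ)
        (((((σ^2)⁻¹ : ℝ)):ℂ) * ((G:ℂ)*hbar/((k:ℝ):ℂ)) * ((n2:ℝ):ℂ))
      = ((((σ^2)⁻¹*n1 + (σ^2)⁻¹*G^2*Complex.normSq hbar*n2/k : ℝ)):ℂ) := by
  rw [_root_.map_mul, _root_.map_mul, map_div₀, _root_.map_mul]
  simp only [Complex.conj_ofReal]
  have hbb : hbar * (starRingEnd ℂ) hbar = ((Complex.normSq hbar : ℝ) : ℂ) :=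
    Complex.mul_conj hbar
  have hkc : ((k:ℝ):ℂ) ≠ 0 := by rwa [Ne, Complex.ofReal_eq_zero]
  have hsc : ((σ:ℝ):ℂ) ≠ 0 := by rwa [Ne, Complex.ofReal_eq_zero]
  push_cast
  field_simp
  linear_combination (G:ℂ)^2*(↑n2:ℂ)*hbb

set_option maxHeartbeats 2000000 in
theorem stmt_6 (L : ℕ) (hL : 1 ≤ L) (σ G P : ℝ) (hσ : 0 < σ) (hG : G ≠ 0) (hP : 0 < P)
    (h₁ h₂ : Fin L → ℂ) (hbar : ℂ) :
    (∀ w : Fin L ⊕ Fin L → ℂ, w ≠ 0 →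
        (combinerSINR P (stackedChannel G hbar h₁ h₂) (noiseCov L σ G h₂) w).im = 0 ∧
        (combinerSINR P (stackedChannel G hbar h₁ h₂) (noiseCov L σ G h₂) w).re ≤
          P * (∑ i, Complex.normSq (h₁ i)) / σ ^ 2
            + ((∑ i, Complex.normSq (h₂ i)) / σ ^ 2) * (P * Complex.normSq hbar / σ ^ 2)
              / ((∑ i, Complex.normSq (h₂ i)) / σ ^ 2 + 1 / (σ ^ 2 * G ^ 2))) ∧
    (stackedChannel G hbar h₁ h₂ ≠ 0 →
      combinerSINR P (stackedChannel G hbar h₁ h₂) (noiseCov L σ G h₂)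
          ((noiseCov L σ G h₂)⁻¹.mulVec (stackedChannel G hbar h₁ h₂))
        = (((P * (∑ i, Complex.normSq (h₁ i)) / σ ^ 2
            + ((∑ i, Complex.normSq (h₂ i)) / σ ^ 2) * (P * Complex.normSq hbar / σ ^ 2)
              / ((∑ i, Complex.normSq (h₂ i)) / σ ^ 2 + 1 / (σ ^ 2 * G ^ 2)) : ℝ)) : ℂ)) := by
  have hσ' : σ ≠ 0 := ne_of_gt hσ
  set n1 : ℝ := ∑ i, Complex.normSq (h₁ i) with hn1
  set n2 : ℝ := ∑ i, Complex.normSq (h₂ i) with hn2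
  set m : ℝ := Complex.normSq hbar with hm
  have hn1nn : 0 ≤ n1 := Finset.sum_nonneg fun i _ => Complex.normSq_nonneg _
  have hn2nn : 0 ≤ n2 := Finset.sum_nonneg fun i _ => Complex.normSq_nonneg _
  have hmnn : 0 ≤ m := Complex.normSq_nonneg _
  set k : ℝ := 1 + G^2*n2 with hk
  have hkpos : 0 < k := by nlinarith [sq_nonneg G]
  set T : ℝ := P * n1 / σ^2 + (n2/σ^2) * (P*m/σ^2) / (n2/σ^2 + 1/(σ^2*G^2)) with hT
  have hG2pos : 0 < G^2 := lt_of_le_of_ne (sq_nonneg G) (Ne.symm (pow_ne_zero 2 hG))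
  have hdenpos : 0 < n2/σ^2 + 1/(σ^2*G^2) := by
    have h1 : 0 ≤ n2/σ^2 := div_nonneg hn2nn (sq_nonneg σ)
    have h2 : 0 < 1/(σ^2*G^2) := by
      apply div_pos one_pos (mul_pos (by positivity) hG2pos)
    linarith
  have hTval : T = P * (n1*k + G^2*m*n2) / (σ^2*k) := by
    have hkne' : (1+G^2*n2) ≠ 0 := hk ▸ hkpos.ne'
    rw [hT, hk]
    field_simp
    ring
  set h : Fin L ⊕ Fin L → ℂ := stackedChannel G hbar h₁ h₂ with hh
  have numfact : ∀ w : Fin L ⊕ Fin L → ℂ,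
      star w ⬝ᵥ (Matrix.vecMulVec h (star h)).mulVec w
        = (starRingEnd ℂ) (star w ⬝ᵥ h) * (star w ⬝ᵥ h) := by
    intro w
    rw [vmv_mulVec, dotProduct_smul, smul_eq_mul, star_dotProduct]
    rfl
  constructor
  · -- part 1
    intro w hw
    set a : ℂ := ∑ i, (starRingEnd ℂ) (w (Sum.inl i)) * h₁ i with ha
    set s : ℂ := ∑ i, (starRingEnd ℂ) (h₂ i) * w (Sum.inr i) with hs
    set A : ℝ := ∑ i, Complex.normSq (w (Sum.inl i)) with hA
    set B : ℝ := ∑ i, Complex.normSq (w (Sum.inr i)) with hB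
    have hAnn : 0 ≤ A := Finset.sum_nonneg fun i _ => Complex.normSq_nonneg _
    have hBnn : 0 ≤ B := Finset.sum_nonneg fun i _ => Complex.normSq_nonneg _
    have hABpos : 0 < A + B := by
      obtain ⟨x, hx⟩ := Function.ne_iff.mp hw
      have hx' : 0 < Complex.normSq (w x) := Complex.normSq_pos.mpr hx
      cases x with
      | inl i =>
        have : Complex.normSq (w (Sum.inl i)) ≤ A :=
          Finset.single_le_sum (f := fun j => Complex.normSq (w (Sum.inl j)))
            (fun j _ => Complex.normSq_nonneg _) (Finset.mem_univ i)
        linarith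
      | inr i =>
        have : Complex.normSq (w (Sum.inr i)) ≤ B :=
          Finset.single_le_sum (f := fun j => Complex.normSq (w (Sum.inr j)))
            (fun j _ => Complex.normSq_nonneg _) (Finset.mem_univ i)
        linarith
    set dR : ℝ := σ^2 * (A + B + G^2 * Complex.normSq s) with hdR
    have hdRpos : 0 < dR := by
      have h1 : 0 ≤ G^2 * Complex.normSq s := mul_nonneg (sq_nonneg G) (Complex.normSq_nonneg _)
      have h2 : 0 < σ^2 := by positivity
      rw [hdR]; nlinarith
    set cw : ℂ := star w ⬝ᵥ h with hcw
    have hsinr : combinerSINR P h (noiseCov L σ G h₂) w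
        = ((P * Complex.normSq cw / dR : ℝ) : ℂ) := by
      rw [combinerSINR, numfact w, dot_w_Rn, ← hcw, ← hA, ← hB, ← hs, ← hdR]
      rw [← Complex.normSq_eq_conj_mul_self]
      push_cast
      ring
    rw [hsinr]
    constructor
    · exact Complex.ofReal_im _
    · rw [Complex.ofReal_re]
      -- the bound
      have hcval : cw = a + (G:ℂ) * hbar * (starRingEnd ℂ) s := by
        rw [hcw, hh, dot_w_h, ← ha, ← hs]
      set α : ℝ := ‖a‖ with hα
      set τ : ℝ := ‖s‖ with hτ
      set β : ℝ := ‖(G:ℂ) * hbar‖ with hβ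
      have habs : ‖cw‖ ≤ α + β * τ := by
        rw [hcval]
        refine (norm_add_le _ _).trans ?_
        rw [norm_mul, Complex.norm_conj]
      have hns : Complex.normSq cw ≤ (α + β*τ)^2 := by
        rw [← Complex.sq_norm]
        have hnn : 0 ≤ ‖cw‖ := norm_nonneg _
        nlinarith [habs, hnn]
      have hα2 : α^2 ≤ A * n1 := by
        rw [hα, ha, hA, hn1]; exact csw (fun i => w (Sum.inl i)) h₁
      have hτ2 : τ^2 ≤ B * n2 := by
        rw [hτ, hs, hB, hn2, mul_comm]; exact csw h₂ (fun i => w (Sum.inr i))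
      have hβ2 : β^2 = G^2 * m := by
        rw [hβ, Complex.sq_norm, Complex.normSq_mul, hm, Complex.normSq_ofReal]; ring
      have hkey := key_ineq A B n1 n2 (G^2) m α τ β hAnn hBnn hn1nn hn2nn (sq_nonneg G)
        (norm_nonneg _) (norm_nonneg _) (norm_nonneg _) hβ2 hα2 hτ2
      have hσ2k : (0:ℝ) < σ^2*k := mul_pos (by positivity) hkpos
      rw [hTval, div_le_iff₀ hdRpos]
      rw [div_mul_eq_mul_div, le_div_iff₀ hσ2k]
      have hτns : Complex.normSq s = τ^2 := by rw [hτ, Complex.sq_norm]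
      have e1 : P * Complex.normSq cw * (σ^2*k) ≤ P * (α+β*τ)^2 * (σ^2*k) :=
        mul_le_mul_of_nonneg_right (mul_le_mul_of_nonneg_left hns hP.le) hσ2k.le
      refine e1.trans ?_
      have e2 : k*(α+β*τ)^2 ≤ (n1*k+G^2*m*n2)*(A+B+G^2*τ^2) := by
        rw [hk]; exact hkey
      calc P * (α+β*τ)^2 * (σ^2*k) = (P*σ^2) * (k*(α+β*τ)^2) := by ring
      _ ≤ (P*σ^2) * ((n1*k+G^2*m*n2)*(A+B+G^2*τ^2)) :=
          mul_le_mul_of_nonneg_left e2 (by positivity)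
      _ = P * (n1*k + G^2*m*n2) * dR := by rw [hdR, hτns]; ring
  · -- part 2 : equality at w = Rn⁻¹ h
    intro hhne
    have hσc : ((σ:ℂ)^2) ≠ 0 := by
      simp [pow_eq_zero_iff, Complex.ofReal_eq_zero, hσ']
    have hkC : (1 : ℂ) + (G:ℂ)^2 * ((n2 : ℝ) : ℂ) = ((k : ℝ) : ℂ) := by
      rw [hk]; push_cast; ring
    have hkCne : ((k:ℝ):ℂ) ≠ 0 := by
      rw [Ne, Complex.ofReal_eq_zero]; linarith
    have hinv := Rn_mul_inv L σ G hσ' h₂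
    have hdet : IsUnit (noiseCov L σ G h₂).det :=
      Matrix.isUnit_det_of_right_inverse hinv
    obtain ⟨v, hv⟩ : ∃ v : Fin L ⊕ Fin L → ℂ, v = Sum.elim (fun i => ((σ:ℂ)^2)⁻¹ * h₁ i)
      (fun j => ((σ:ℂ)^2)⁻¹ * ((G:ℂ)*hbar/((k:ℝ):ℂ)) * h₂ j) := ⟨_, rfl⟩
    have hRv : (noiseCov L σ G h₂).mulVec v = h := by
      rw [Rn_mulVec]
      funext x
      cases x with
      | inl i =>
        simp only [hv, Sum.elim_inl, hh, stackedChannel]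
        field_simp
        exact mul_div_cancel_left₀ _ (Complex.ofReal_ne_zero.mpr hσ')
      | inr j =>
        simp only [hv, Sum.elim_inr, hh, stackedChannel]
        have hsum : ∑ i, (starRingEnd ℂ) (h₂ i) * (((σ:ℂ)^2)⁻¹ * ((G:ℂ)*hbar/((k:ℝ):ℂ)) * h₂ i)
            = ((σ:ℂ)^2)⁻¹ * ((G:ℂ)*hbar/((k:ℝ):ℂ)) * ((n2:ℝ):ℂ) := by
          rw [← sum_conj_mul_self h₂, Finset.mul_sum]
          exact Finset.sum_congr rfl fun i _ => by ring
        rw [hsum]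
        have hkk : ((k:ℝ):ℂ) = 1 + (G:ℂ)^2 * ((n2:ℝ):ℂ) := hkC.symm
        field_simp
        rw [hkk]
        calc _ = ((σ:ℂ) * (σ:ℂ)⁻¹) * ((G:ℂ)*hbar*h₂ j + (G:ℂ)^3*hbar*h₂ j*((n2:ℝ):ℂ)) := by ring
          _ = _ := by rw [mul_inv_cancel₀ (Complex.ofReal_ne_zero.mpr hσ'), one_mul]; ring
    have hvinv : (noiseCov L σ G h₂)⁻¹.mulVec h = v := by
      rw [← hRv, mulVec_mulVec, Matrix.nonsing_inv_mul _ hdet, one_mulVec]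
    set qR : ℝ := (σ^2)⁻¹ * n1 + (σ^2)⁻¹ * G^2 * m * n2 / k with hqR
    have hcv : star v ⬝ᵥ h = ((qR : ℝ) : ℂ) := by
      rw [hh, dot_w_h]
      have t1 : ∑ i, (starRingEnd ℂ) (v (Sum.inl i)) * h₁ i
          = ((( (σ^2)⁻¹ * n1 : ℝ)) : ℂ) := by
        have : ∀ i, (starRingEnd ℂ) (v (Sum.inl i)) * h₁ i
            = ((((σ^2)⁻¹ : ℝ)):ℂ) * ((starRingEnd ℂ) (h₁ i) * h₁ i) := by
          intro i
          simp only [hv, Sum.elim_inl, _root_.map_mul]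
          have : (starRingEnd ℂ) (((σ:ℂ)^2)⁻¹) = ((((σ^2)⁻¹ : ℝ)):ℂ) := by
            rw [map_inv₀]; push_cast; simp [Complex.conj_ofReal]
          rw [this]; ring
        rw [Finset.sum_congr rfl fun i _ => this i, ← Finset.mul_sum, sum_conj_mul_self h₁,
          ← hn1]
        push_cast; ring
      have t2 : ∑ i, (starRingEnd ℂ) (h₂ i) * v (Sum.inr i)
          = ((((σ^2)⁻¹ : ℝ)) : ℂ) * ((G:ℂ)*hbar/((k:ℝ):ℂ)) * ((n2:ℝ):ℂ) := by
        have : ∀ i, (starRingEnd ℂ) (h₂ i) * v (Sum.inr i)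
            = ((σ:ℂ)^2)⁻¹ * ((G:ℂ)*hbar/((k:ℝ):ℂ)) * ((starRingEnd ℂ) (h₂ i) * h₂ i) := by
          intro i; simp only [hv, Sum.elim_inr]; ring
        rw [Finset.sum_congr rfl fun i _ => this i, ← Finset.mul_sum, sum_conj_mul_self h₂,
          ← hn2]
        push_cast; ring
      rw [t1, t2, hqR, hm]
      exact scalar_cv σ G k n1 n2 hbar hkpos.ne' hσ'
    have hqRpos : 0 < qR := by
      have hex := Function.ne_iff.mp hhne
      obtain ⟨x, hx⟩ := hex
      have hterm2nn : 0 ≤ (σ^2)⁻¹ * G^2 * m * n2 / k :=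
        div_nonneg (mul_nonneg (mul_nonneg (mul_nonneg (by positivity) (sq_nonneg G)) hmnn) hn2nn) hkpos.le
      have hterm1nn : 0 ≤ (σ^2)⁻¹ * n1 := mul_nonneg (by positivity) hn1nn
      cases x with
      | inl i =>
        have hpos : 0 < Complex.normSq (h₁ i) := by
          apply Complex.normSq_pos.mpr
          simpa [hh, stackedChannel] using hx
        have hle : Complex.normSq (h₁ i) ≤ n1 :=
          Finset.single_le_sum (fun j _ => Complex.normSq_nonneg _) (Finset.mem_univ i)
        have hn1pos : 0 < n1 := lt_of_lt_of_le hpos hle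
        have : 0 < (σ^2)⁻¹ * n1 := mul_pos (by positivity) hn1pos
        rw [hqR]; linarith
      | inr i =>
        have hx' : (G:ℂ) * hbar * h₂ i ≠ 0 := by simpa [hh, stackedChannel] using hx
        have hbne : hbar ≠ 0 := by intro hb; apply hx'; rw [hb]; ring
        have h2ne : h₂ i ≠ 0 := by intro hb; apply hx'; rw [hb]; ring
        have hmpos : 0 < m := Complex.normSq_pos.mpr hbne
        have hn2pos : 0 < n2 := by
          have hpos : 0 < Complex.normSq (h₂ i) := Complex.normSq_pos.mpr h2ne
          have hle : Complex.normSq (h₂ i) ≤ n2 :=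
            Finset.single_le_sum (fun j _ => Complex.normSq_nonneg _) (Finset.mem_univ i)
          linarith
        have : 0 < (σ^2)⁻¹ * G^2 * m * n2 / k :=
          div_pos (mul_pos (mul_pos (mul_pos (by positivity) hG2pos) hmpos) hn2pos) hkpos
        rw [hqR]; linarith
    have hqRne : ((qR:ℝ):ℂ) ≠ 0 := by
      rw [Ne, Complex.ofReal_eq_zero]; exact ne_of_gt hqRpos
    rw [hvinv, combinerSINR, numfact v, hcv]
    rw [show star v ⬝ᵥ (noiseCov L σ G h₂).mulVec v = ((qR:ℝ):ℂ) from by rw [hRv]; exact hcv]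
    rw [Complex.conj_ofReal]
    have hPq : (P:ℂ) * (((qR:ℝ):ℂ) * ((qR:ℝ):ℂ)) / ((qR:ℝ):ℂ) = ((P*qR : ℝ):ℂ) := by
      field_simp
      exact (Complex.ofReal_mul P qR).symm
    rw [hPq]
    congr 1
    have hkne' : (1+G^2*n2) ≠ 0 := hk ▸ hkpos.ne'
    rw [hqR, hT, hk]
    field_simp
    ring
end
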